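/- Let 𝒜 be a Hilbert evolution algebra with a natural orthonormal basis {e_i}_{i∈ℕ}. If U ⊆ ℕ and I := the closed linear span of {e_k : k ∈ U}, then for every n ∈ ℕ one has I^{<n>} ⊆ closed linear span of {e_k : k ∈ D^{n-1}(U)}. -/

import Mathlib

/-!
Since `e i · e j = 0` for `j ≠ i` and left multiplication is continuous, expanding `y` in the
basis gives `e i · y = ⟪e i, y⟫ • (e i · e i)`, which lies in the closed span of the `e k` with
`k ∈ D¹(i)`. Hence right multiplication by any `y`, being continuous by commutativity, maps the
closed span of `{e i : i ∈ V}` into that of `{e k : k ∈ D¹(V)}`, and induction on `n` gives the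
claim.
-/

noncomputable section

open scoped ENat

/-! ### Digraph notions associated to a matrix of structural constants

The associated digraph `G(𝒜,𝓑)` has vertex set `ℕ` and a directed edge `(i,k)` iff
`ω i k ≠ 0`. -/

/-- `DsetU ω m U` is the set `D^m(U)` of `m`-th generation descendants of `U`:
`D^0(U) = U` and `D^{m+1}(U) = {k | ∃ i ∈ D^m(U), ω i k ≠ 0}`. -/
def DsetU (ω : ℕ → ℕ → ℂ) : ℕ → Set ℕ → Set ℕ
  | 0, U => U
  | m + 1, U => {k | ∃ i ∈ DsetU ω m U, ω i k ≠ 0}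

/-- `Dm ω m i = D^m(i)`, the `m`-th generation descendants of the vertex `i`. -/
def Dm (ω : ℕ → ℕ → ℂ) (m i : ℕ) : Set ℕ := DsetU ω m {i}

/-- `Desc ω i = D(i) = ⋃_{m ≥ 1} D^m(i)`, the set of descendants of `i`. -/
def Desc (ω : ℕ → ℕ → ℂ) (i : ℕ) : Set ℕ := ⋃ m ∈ {m : ℕ | 1 ≤ m}, Dm ω m i

/-- `gdist ω i u` is the length of a shortest directed path (walk) from `i` to `u`. -/
def gdist (ω : ℕ → ℕ → ℂ) (i u : ℕ) : ℕ := sInf {n : ℕ | u ∈ Dm ω n i}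

/-- The depth `δ(G_i) = sup {dist(i,u) : u ∈ D(i)}` of the subgraph `G_i` induced on the
descendants of `i`, as an extended natural number (`⊤` when unbounded). -/
def depth (ω : ℕ → ℕ → ℂ) (i : ℕ) : ℕ∞ := ⨆ u ∈ Desc ω i, (gdist ω i u : ℕ∞)

/-- `p 0, p 1, …, p n` is an oriented cycle: a non-empty directed path in which the only
repeated vertices are the first and the last one. -/
def IsOrientedCycle (ω : ℕ → ℕ → ℂ) (n : ℕ) (p : ℕ → ℕ) : Prop :=
  0 < n ∧ (∀ m < n, ω (p m) (p (m + 1)) ≠ 0) ∧ p n = p 0 ∧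
    ∀ a b, a < b → b < n → p a ≠ p b

/-- The digraph associated to `ω` contains an oriented cycle. -/
def HasOrientedCycle (ω : ℕ → ℕ → ℂ) : Prop := ∃ n p, IsOrientedCycle ω n p

/-! ### Algebra notions -/

variable {H : Type*} [NormedAddCommGroup H] [InnerProductSpace ℂ H] [CompleteSpace H]

/-- The structural constants of a Hilbert evolution algebra with product `mul` relative to
the natural orthonormal basis `e`: `ω i k` is the `k`-th coordinate of `e i · e i`,
so that `e i · e i = ∑'_k ω i k • e k`. -/
def structConst (mul : H →ₗ[ℂ] H →ₗ[ℂ] H) (e : HilbertBasis ℕ ℂ H) (i k : ℕ) : ℂ :=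
  e.repr (mul (e i) (e i)) k

/-- Principal powers: `ppow mul v n = v^n` for `n ≥ 1` (with the junk value `v` at `n = 0`):
`v^1 = v` and `v^{n+1} = v^n · v`. -/
def ppow (mul : H →ₗ[ℂ] H →ₗ[ℂ] H) (v : H) : ℕ → H
  | 0 => v
  | 1 => v
  | n + 2 => mul (ppow mul v (n + 1)) v

/-- The algebra is nil: every element has a vanishing principal power. -/
def IsNil (mul : H →ₗ[ℂ] H →ₗ[ℂ] H) : Prop := ∀ v : H, ∃ n : ℕ, 1 ≤ n ∧ ppow mul v n = 0

/-- The product `S·T` of two subspaces: the span of all products `x·y`, `x ∈ S`, `y ∈ T`. -/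
def mulSub (mul : H →ₗ[ℂ] H →ₗ[ℂ] H) (S T : Submodule ℂ H) : Submodule ℂ H :=
  Submodule.span ℂ {z : H | ∃ x ∈ S, ∃ y ∈ T, z = mul x y}

/-- The powers `𝒜^n` (for `n ≥ 1`, with the junk value `⊤` at `n = 0`):
`𝒜^1 = 𝒜` and `𝒜^{n+1} = ∑_{i=1}^{n} 𝒜^i 𝒜^{n+1-i}`. -/
def apow (mul : H →ₗ[ℂ] H →ₗ[ℂ] H) (n : ℕ) : Submodule ℂ H :=
  n.strongRecOn fun n ih =>
    match n, ih with
    | 0, _ => ⊤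
    | 1, _ => ⊤
    | m + 2, ih =>
      ⨆ (i : ℕ) (h1 : 1 ≤ i) (h2 : i ≤ m + 1),
        mulSub mul (ih i (by omega)) (ih (m + 2 - i) (by omega))

/-- The algebra is nilpotent: `𝒜^n = 0` for some `n`. -/
def IsNilpotent' (mul : H →ₗ[ℂ] H →ₗ[ℂ] H) : Prop := ∃ n : ℕ, 1 ≤ n ∧ apow mul n = ⊥

/-- The right powers `𝒜^{<n>}` (for `n ≥ 1`, with the junk value `⊤` at `n = 0`):
`𝒜^{<1>} = 𝒜` and `𝒜^{<n+1>} = 𝒜^{<n>}𝒜`. -/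
def rapow (mul : H →ₗ[ℂ] H →ₗ[ℂ] H) : ℕ → Submodule ℂ H
  | 0 => ⊤
  | 1 => ⊤
  | n + 2 => mulSub mul (rapow mul (n + 1)) ⊤

/-- The algebra is right nilpotent: `𝒜^{<n>} = 0` for some `n`. -/
def IsRightNilpotent (mul : H →ₗ[ℂ] H →ₗ[ℂ] H) : Prop := ∃ n : ℕ, 1 ≤ n ∧ rapow mul n = ⊥

/-- The index of right nilpotency `n_r(𝒜) = min {n : 𝒜^{<n>} = 0}`. -/
def rNilIndex (mul : H →ₗ[ℂ] H →ₗ[ℂ] H) : ℕ := sInf {n : ℕ | 1 ≤ n ∧ rapow mul n = ⊥}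

/-- Powers of a subset `I ⊆ 𝒜` (for `n ≥ 1`, with the junk value `I` at `n = 0`):
`I^{<1>} = I` and `I^{<n+1>}` is the set of finite sums `∑_j x_j · y_j` with
`x_j ∈ I^{<n>}` and `y_j ∈ I`. -/
def setPow (mul : H →ₗ[ℂ] H →ₗ[ℂ] H) (I : Set H) : ℕ → Set H
  | 0 => I
  | 1 => I
  | n + 2 => {v : H | ∃ (m : ℕ) (x y : Fin m → H),
      (∀ j, x j ∈ setPow mul I (n + 1)) ∧ (∀ j, y j ∈ I) ∧
        v = ∑ j, mul (x j) (y j)}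

end

namespace HilbertBasis

variable {ι 𝕜 E F : Type*} [RCLike 𝕜] [NormedAddCommGroup E] [InnerProductSpace 𝕜 E]
  [TopologicalSpace F] [AddCommGroup F] [Module 𝕜 F] [T2Space F]

theorem mem_topologicalClosure_span_image_of_repr_eq_zero (b : HilbertBasis ι 𝕜 E) {S : Set ι}
    {x : E} (h : ∀ k ∉ S, b.repr x k = 0) :
    x ∈ (Submodule.span 𝕜 (b '' S)).topologicalClosure := by
  refine mem_closure_of_tendsto (b.hasSum_repr x) (.of_forall fun s => Submodule.sum_mem _ ?_)
  intro k _
  by_cases hk : k ∈ S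
  · exact Submodule.smul_mem _ _ (Submodule.subset_span ⟨k, hk, rfl⟩)
  · simp [h k hk]

theorem linearMap_apply_eq_repr_smul (b : HilbertBasis ι 𝕜 E) {f : E →ₗ[𝕜] F}
    (hf : Continuous f) {i : ι} (h : ∀ j ≠ i, f (b j) = 0) (x : E) :
    f x = b.repr x i • f (b i) := by
  have hsum : HasSum (fun j => b.repr x j • f (b j)) (f x) := by
    simpa only [Function.comp_def, map_smul] using (b.hasSum_repr x).map f hf
  refine hsum.unique (hasSum_single i fun j hj => ?_)
  rw [h j hj, smul_zero]

end HilbertBasis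

section

variable {H : Type*} [NormedAddCommGroup H] [InnerProductSpace ℂ H]

theorem mul_basis_mem_topologicalClosure_span (mul : H →ₗ[ℂ] H →ₗ[ℂ] H)
    (hcont : ∀ x : H, Continuous fun y => mul x y) (e : HilbertBasis ℕ ℂ H)
    (hnat : ∀ i j : ℕ, i ≠ j → mul (e i) (e j) = 0) (i : ℕ) (y : H) :
    mul (e i) y ∈
      (Submodule.span ℂ (e '' {k | structConst mul e i k ≠ 0})).topologicalClosure := by
  rw [e.linearMap_apply_eq_repr_smul (hcont (e i)) (fun j hj => hnat i j hj.symm) y]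
  exact Submodule.smul_mem _ _
    (e.mem_topologicalClosure_span_image_of_repr_eq_zero fun k hk => not_not.mp hk)

theorem mul_mem_topologicalClosure_span_descendants (mul : H →ₗ[ℂ] H →ₗ[ℂ] H)
    (hcomm : ∀ x y : H, mul x y = mul y x) (hcont : ∀ x : H, Continuous fun y => mul x y)
    (e : HilbertBasis ℕ ℂ H) (hnat : ∀ i j : ℕ, i ≠ j → mul (e i) (e j) = 0) {V : Set ℕ}
    {x : H} (hx : x ∈ (Submodule.span ℂ (e '' V)).topologicalClosure) (y : H) :
    mul x y ∈ (Submodule.span ℂ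
      (e '' {k | ∃ i ∈ V, structConst mul e i k ≠ 0})).topologicalClosure := by
  set M := Submodule.span ℂ (e '' {k | ∃ i ∈ V, structConst mul e i k ≠ 0})
  have hright : Continuous (mul.flip y) := (hcont y).congr fun z => hcomm y z
  have hspan : Submodule.span ℂ (e '' V) ≤ M.topologicalClosure.comap (mul.flip y) := by
    rw [Submodule.span_le]
    rintro _ ⟨i, hi, rfl⟩
    have hsub : {k | structConst mul e i k ≠ 0} ⊆ {k | ∃ i ∈ V, structConst mul e i k ≠ 0} :=
      fun k hk => ⟨i, hi, hk⟩
    exact Submodule.topologicalClosure_mono (Submodule.span_mono (Set.image_mono hsub))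
      (mul_basis_mem_topologicalClosure_span mul hcont e hnat i y)
  exact Submodule.topologicalClosure_minimal _ hspan
    (M.isClosed_topologicalClosure.preimage hright) hx

theorem setPow_succ_succ_subset (mul : H →ₗ[ℂ] H →ₗ[ℂ] H) (I : Set H) (n : ℕ)
    {M : Submodule ℂ H} (h : ∀ x ∈ setPow mul I (n + 1), ∀ y ∈ I, mul x y ∈ M) :
    setPow mul I (n + 2) ⊆ M := by
  rintro _ ⟨m, x, y, hx, hy, rfl⟩
  exact Submodule.sum_mem _ fun j _ => h _ (hx j) _ (hy j)

end

noncomputable section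

variable {H : Type*} [NormedAddCommGroup H] [InnerProductSpace ℂ H] [CompleteSpace H]

/-- Let `𝒜` be a complex separable Hilbert evolution algebra with natural
orthonormal basis `{e i}` and structural constants `ω`. If `U ⊆ ℕ` and `I` is the closed
linear span of `{e k : k ∈ U}`, then for every `n ≥ 1`,
`I^{<n>} ⊆ closed linear span of {e k : k ∈ D^{n-1}(U)}`. -/
theorem stmt_7
    (mul : H →ₗ[ℂ] H →ₗ[ℂ] H)
    (hcomm : ∀ x y : H, mul x y = mul y x)
    (hcont : ∀ x : H, Continuous fun y => mul x y)
    (e : HilbertBasis ℕ ℂ H)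
    (hnat : ∀ i j : ℕ, i ≠ j → mul (e i) (e j) = 0)
    (ω : ℕ → ℕ → ℂ)
    (hω : ∀ i k : ℕ, ω i k = structConst mul e i k)
    (U : Set ℕ) :
    ∀ n : ℕ, 1 ≤ n →
      setPow mul ((Submodule.span ℂ ((fun k : ℕ => e k) '' U)).topologicalClosure : Set H) n ⊆
        ((Submodule.span ℂ ((fun k : ℕ => e k) '' DsetU ω (n - 1) U)).topologicalClosure :
          Set H) := by
  obtain rfl : ω = structConst mul e := funext₂ hω
  intro n hn
  obtain ⟨m, rfl⟩ := Nat.exists_eq_add_of_le' hn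
  rw [Nat.add_sub_cancel]
  induction m with
  | zero => exact subset_rfl
  | succ m ih =>
    exact setPow_succ_succ_subset mul _ m fun x hx y _ =>
      mul_mem_topologicalClosure_span_descendants mul hcomm hcont e hnat (ih le_add_self hx) y

end
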